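/- For a finite family of probability distributions p_1, ..., p_n on a finite set, and any probability distribution q with full support, the sum ∑_{i=1}^n D(p_i ‖ q) equals ∑_{i=1}^n D(p_i ‖ s) + n · D(s ‖ q), where s = (1/n) ∑_{i=1}^n p_i is the centroid of the family (assuming each p_i has support contained in the support of s). -/
import Mathlib


open Finset

/-- Kullback–Leibler divergence on finite distributions (convention `0 * log _ = 0`,
`Real.log 0 = 0`). -/
noncomputable def KL {m : ℕ} (p q : Fin m → ℝ) : ℝ :=
  ∑ i, p i * Real.log (p i / q i)

theorem kl_centroid_decomposition {m n : ℕ}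
    (p : Fin n → Fin m → ℝ)
    (hp : ∀ i, (∀ j, 0 ≤ p i j) ∧ ∑ j, p i j = 1)
    (q : Fin m → ℝ) (hq0 : ∀ j, 0 < q j) (hq1 : ∑ j, q j = 1)
    (s : Fin m → ℝ) (hs : s = fun j => (1 / (n : ℝ)) * ∑ i, p i j)
    (hsupp : ∀ i j, p i j ≠ 0 → s j ≠ 0) :
    ∑ i, KL (p i) q = ∑ i, KL (p i) s + (n : ℝ) * KL s q := by
  have hsum : ∀ j, ∑ i, p i j = (n : ℝ) * s j := by
    intro j
    rcases Nat.eq_zero_or_pos n with h | h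
    · subst h; simp
    · have hn : (n : ℝ) ≠ 0 := by positivity
      rw [hs]; field_simp
  have key : ∀ i j, p i j * Real.log (p i j / q j)
      = p i j * Real.log (p i j / s j) + p i j * Real.log (s j / q j) := by
    intro i j
    by_cases h : p i j = 0
    · simp [h]
    · have hs' := hsupp i j h
      have hq' := (hq0 j).ne'
      rw [Real.log_div h hq', Real.log_div h hs', Real.log_div hs' hq']
      ring
  have h1 : ∑ i, KL (p i) q
      = ∑ i, KL (p i) s + ∑ i, ∑ j, p i j * Real.log (s j / q j) := by
    rw [← Finset.sum_add_distrib]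
    unfold KL
    congr 1; ext i
    rw [← Finset.sum_add_distrib]
    exact Finset.sum_congr rfl fun j _ => key i j
  rw [h1]
  congr 1
  rw [Finset.sum_comm]
  unfold KL
  rw [Finset.mul_sum]
  congr 1; ext j
  rw [← Finset.sum_mul, hsum j]
  ring
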